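/- arXiv:0812.2818 — 3 statements merged into one kernel-verified Lean document; each statement's English description precedes it below -/
import Mathlib

section
/- Suppose y = Xθ_s, Z = X + Ξ with |Ξ|_∞ ≤ δ, and let θ̂ satisfy |y − Zθ̂|_∞ ≤ δ|θ̂|_1. Then (1/n)|X(θ̂ − θ_s)|_2^2 ≤ 4δ^2|θ̂|_1^2. -/
theorem stmt_2 (n p : ℕ) (X Ξ Z : Matrix (Fin n) (Fin p) ℝ) (θs θhat : Fin p → ℝ)
    (y : Fin n → ℝ) (δ : ℝ) (hδ : 0 ≤ δ)
    (hy : y = X.mulVec θs) (hZ : Z = X + Ξ)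
    (hΞ : ∀ i j, |Ξ i j| ≤ δ)
    (hfeas : ∀ i, |y i - Z.mulVec θhat i| ≤ δ * ∑ j, |θhat j|) :
    (1 / (n : ℝ)) * ∑ i, (X.mulVec (θhat - θs) i) ^ 2
      ≤ 4 * δ ^ 2 * (∑ j, |θhat j|) ^ 2 := by
  set S := ∑ j, |θhat j| with hS
  have hS0 : 0 ≤ S := Finset.sum_nonneg fun j _ => abs_nonneg _
  have key : ∀ i, (X.mulVec (θhat - θs) i) ^ 2 ≤ 4 * δ ^ 2 * S ^ 2 := by
    intro i
    have h1 : X.mulVec (θhat - θs) i = (X.mulVec θhat i - Z.mulVec θhat i) + (Z.mulVec θhat i - y i) := by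
      rw [hy]
      simp [Matrix.mulVec_sub]
    have h2 : |X.mulVec θhat i - Z.mulVec θhat i| ≤ δ * S := by
      rw [hZ]
      have : (X + Ξ).mulVec θhat i = X.mulVec θhat i + Ξ.mulVec θhat i := by
        simp [Matrix.add_mulVec]
      rw [this]
      have : X.mulVec θhat i - (X.mulVec θhat i + Ξ.mulVec θhat i) = -(Ξ.mulVec θhat i) := by ring
      rw [this, abs_neg]
      calc |Ξ.mulVec θhat i| ≤ ∑ j, |Ξ i j * θhat j| := by
            rw [Matrix.mulVec, dotProduct]
            exact Finset.abs_sum_le_sum_abs _ _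
        _ ≤ ∑ j, δ * |θhat j| := by
            apply Finset.sum_le_sum
            intro j _
            rw [abs_mul]
            exact mul_le_mul_of_nonneg_right (hΞ i j) (abs_nonneg _)
        _ = δ * S := by rw [Finset.mul_sum]
    have h3 : |Z.mulVec θhat i - y i| ≤ δ * S := by
      rw [abs_sub_comm]; exact hfeas i
    have habs : |X.mulVec (θhat - θs) i| ≤ 2 * δ * S := by
      rw [h1]
      calc |(X.mulVec θhat i - Z.mulVec θhat i) + (Z.mulVec θhat i - y i)|
          ≤ |X.mulVec θhat i - Z.mulVec θhat i| + |Z.mulVec θhat i - y i| := abs_add_le _ _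
        _ ≤ δ * S + δ * S := add_le_add h2 h3
        _ = 2 * δ * S := by ring
    calc (X.mulVec (θhat - θs) i) ^ 2 ≤ (2 * δ * S) ^ 2 := by
            have := abs_le.mp habs
            nlinarith [this.1, this.2]
        _ = 4 * δ ^ 2 * S ^ 2 := by ring
  have hsum : ∑ i, (X.mulVec (θhat - θs) i) ^ 2 ≤ n * (4 * δ ^ 2 * S ^ 2) := by
    calc ∑ i, (X.mulVec (θhat - θs) i) ^ 2 ≤ ∑ _i : Fin n, 4 * δ ^ 2 * S ^ 2 :=
          Finset.sum_le_sum fun i _ => key i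
      _ = n * (4 * δ ^ 2 * S ^ 2) := by simp [Finset.sum_const, mul_comm]
  rcases Nat.eq_zero_or_pos n with hn | hn
  · subst hn; simp
    positivity
  · have hn' : (0:ℝ) < n := by exact_mod_cast hn
    rw [div_mul_eq_mul_div, one_mul, div_le_iff₀ hn']
    calc ∑ i, (X.mulVec (θhat - θs) i) ^ 2 ≤ n * (4 * δ ^ 2 * S ^ 2) := hsum
      _ = 4 * δ ^ 2 * S ^ 2 * n := by ring
end

section
/- Let Δ ∈ R^p, J ⊆ {1,…,p} with |J| ≤ s, and let J_1 be the set of indices of the s largest (in absolute value) coordinates of Δ outside J, with J_{01} = J ∪ J_1. Then |Δ_{J_{01}^c}|_2 ≤ |Δ_{J^c}|_1/√s. -/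
theorem stmt_6 (p s : ℕ) (hs : 1 ≤ s) (hsp : 2 * s ≤ p)
    (Δ : Fin p → ℝ) (J J1 : Finset (Fin p))
    (hJ : J.card ≤ s) (hJ1c : J1 ⊆ Jᶜ) (hJ1card : J1.card = s)
    (hlargest : ∀ j ∈ J1, ∀ k, k ∉ J → k ∉ J1 → |Δ k| ≤ |Δ j|) :
    Real.sqrt (∑ j ∈ (J ∪ J1)ᶜ, (Δ j) ^ 2)
      ≤ (∑ j ∈ Jᶜ, |Δ j|) / Real.sqrt s := by
  set S := ∑ j ∈ Jᶜ, |Δ j| with hSdef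
  have hS0 : 0 ≤ S := Finset.sum_nonneg fun _ _ => abs_nonneg _
  have hs' : (0:ℝ) < (s:ℝ) := by exact_mod_cast hs
  have hsub : (J ∪ J1)ᶜ ⊆ Jᶜ :=
    Finset.compl_subset_compl.mpr Finset.subset_union_left
  have hJ1S : ∑ k ∈ J1, |Δ k| ≤ S :=
    Finset.sum_le_sum_of_subset_of_nonneg hJ1c (fun _ _ _ => abs_nonneg _)
  have hkey : ∀ j ∈ (J ∪ J1)ᶜ, |Δ j| ≤ S / s := by
    intro j hj
    simp only [Finset.mem_compl, Finset.mem_union, not_or] at hj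
    have h1 : ∑ _k ∈ J1, |Δ j| ≤ ∑ k ∈ J1, |Δ k| :=
      Finset.sum_le_sum fun k hk => hlargest k hk j hj.1 hj.2
    rw [Finset.sum_const, hJ1card, nsmul_eq_mul] at h1
    rw [le_div_iff₀ hs']
    calc |Δ j| * s = (s:ℝ) * |Δ j| := by ring
    _ ≤ ∑ k ∈ J1, |Δ k| := h1
    _ ≤ S := hJ1S
  have hsum : ∑ j ∈ (J ∪ J1)ᶜ, (Δ j) ^ 2 ≤ S ^ 2 / s := by
    calc ∑ j ∈ (J ∪ J1)ᶜ, (Δ j) ^ 2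
        ≤ ∑ j ∈ (J ∪ J1)ᶜ, (S / s) * |Δ j| := by
          refine Finset.sum_le_sum fun j hj => ?_
          have : (Δ j)^2 = |Δ j| * |Δ j| := by
            rw [← sq_abs]; ring
          rw [this]
          exact mul_le_mul_of_nonneg_right (hkey j hj) (abs_nonneg _)
    _ = (S / s) * ∑ j ∈ (J ∪ J1)ᶜ, |Δ j| := by rw [Finset.mul_sum]
    _ ≤ (S / s) * S := by
          refine mul_le_mul_of_nonneg_left ?_ (by positivity)
          exact Finset.sum_le_sum_of_subset_of_nonneg hsub (fun _ _ _ => abs_nonneg _)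
    _ = S ^ 2 / s := by ring
  calc Real.sqrt (∑ j ∈ (J ∪ J1)ᶜ, (Δ j) ^ 2)
      ≤ Real.sqrt (S ^ 2 / s) := Real.sqrt_le_sqrt hsum
  _ = S / Real.sqrt s := by
      rw [Real.sqrt_div (sq_nonneg S), Real.sqrt_sq hS0]
end

section
/- Consider the model y = Xθ_s + ξ, Z = X + Ξ, where all diagonal entries of X^TX/n are 1, |(1/n)Z^Tξ|_∞ ≤ ε, and |Ξ|_∞ ≤ δ. Then θ_s lies in the set {θ ∈ R^p : |(1/n)Z^T(y − Zθ)|_∞ ≤ (1+δ)δ|θ|_1 + ε}. -/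
open Matrix

theorem stmt_10 (n p : ℕ) (X Ξ Z : Matrix (Fin n) (Fin p) ℝ) (θs : Fin p → ℝ)
    (ξ : Fin n → ℝ) (y : Fin n → ℝ) (δ ε : ℝ) (hδ : 0 ≤ δ)
    (hX : ∀ j, ∑ i, (X i j) ^ 2 = (n : ℝ))
    (hΞ : ∀ i j, |Ξ i j| ≤ δ) (hZ : Z = X + Ξ)
    (hξ : ∀ j, |(1 / (n : ℝ)) * Zᵀ.mulVec ξ j| ≤ ε)
    (hy : y = X.mulVec θs + ξ) :
    θs ∈ {θ : Fin p → ℝ | ∀ j, |(1 / (n : ℝ)) * Zᵀ.mulVec (y - Z.mulVec θ) j|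
            ≤ (1 + δ) * δ * (∑ k, |θ k|) + ε} := by
  intro j
  set S := ∑ k, |θs k| with hS
  have hS0 : 0 ≤ S := Finset.sum_nonneg fun _ _ => abs_nonneg _
  have hres : y - Z.mulVec θs = ξ - Ξ.mulVec θs := by
    subst hy hZ
    ext i
    simp [Matrix.add_mulVec, Pi.sub_apply]
  rw [hres]
  have hsplit : Zᵀ.mulVec (ξ - Ξ.mulVec θs) j
      = Zᵀ.mulVec ξ j - Zᵀ.mulVec (Ξ.mulVec θs) j := by
    rw [Matrix.mulVec_sub]; rfl
  -- bound on column sums of |X|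
  have hXcol : ∀ j', ∑ i, |X i j'| ≤ (n : ℝ) := by
    intro j'
    have h := Finset.sum_mul_sq_le_sq_mul_sq Finset.univ (fun _ : Fin n => (1 : ℝ))
      (fun i => |X i j'|)
    simp only [one_mul, one_pow, Finset.sum_const, Finset.card_univ, Fintype.card_fin,
      nsmul_eq_mul, mul_one, sq_abs] at h
    rw [hX j'] at h
    have hnn : 0 ≤ ∑ i, |X i j'| := Finset.sum_nonneg fun _ _ => abs_nonneg _
    nlinarith [h, hnn, Nat.cast_nonneg (α := ℝ) n]
  have hZcol : ∑ i, |Z i j| ≤ (n : ℝ) * (1 + δ) := by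
    have : ∀ i, |Z i j| ≤ |X i j| + δ := by
      intro i
      rw [hZ]
      calc |(X + Ξ) i j| = |X i j + Ξ i j| := rfl
        _ ≤ |X i j| + |Ξ i j| := abs_add_le _ _
        _ ≤ |X i j| + δ := by linarith [hΞ i j]
    calc ∑ i, |Z i j| ≤ ∑ i, (|X i j| + δ) := Finset.sum_le_sum fun i _ => this i
      _ = (∑ i, |X i j|) + (n : ℝ) * δ := by
          rw [Finset.sum_add_distrib]
          simp [Finset.sum_const, mul_comm]
      _ ≤ (n : ℝ) + (n : ℝ) * δ := by linarith [hXcol j]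
      _ = (n : ℝ) * (1 + δ) := by ring
  have hinner : ∀ i, |∑ k, Ξ i k * θs k| ≤ δ * S := by
    intro i
    calc |∑ k, Ξ i k * θs k| ≤ ∑ k, |Ξ i k * θs k| := Finset.abs_sum_le_sum_abs _ _
      _ ≤ ∑ k, δ * |θs k| := by
          refine Finset.sum_le_sum fun k _ => ?_
          rw [abs_mul]
          exact mul_le_mul_of_nonneg_right (hΞ i k) (abs_nonneg _)
      _ = δ * S := by rw [hS, Finset.mul_sum]
  have hkey : |Zᵀ.mulVec (Ξ.mulVec θs) j| ≤ (n : ℝ) * ((1 + δ) * δ * S) := by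
    have h1 : Zᵀ.mulVec (Ξ.mulVec θs) j = ∑ i, Z i j * ∑ k, Ξ i k * θs k := by
      simp [Matrix.mulVec, dotProduct, Matrix.transpose_apply]
    rw [h1]
    calc |∑ i, Z i j * ∑ k, Ξ i k * θs k|
        ≤ ∑ i, |Z i j * ∑ k, Ξ i k * θs k| := Finset.abs_sum_le_sum_abs _ _
      _ ≤ ∑ i, |Z i j| * (δ * S) := by
          refine Finset.sum_le_sum fun i _ => ?_
          rw [abs_mul]
          exact mul_le_mul_of_nonneg_left (hinner i) (abs_nonneg _)
      _ = (∑ i, |Z i j|) * (δ * S) := by rw [Finset.sum_mul]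
      _ ≤ (n : ℝ) * (1 + δ) * (δ * S) := by
          exact mul_le_mul_of_nonneg_right hZcol (by positivity)
      _ = (n : ℝ) * ((1 + δ) * δ * S) := by ring
  rw [hsplit, mul_sub]
  rcases Nat.eq_zero_or_pos n with hn | hn
  · subst hn
    have hε : 0 ≤ ε := le_trans (abs_nonneg _) (hξ j)
    simp only [Nat.cast_zero, div_zero, zero_mul, sub_zero, abs_zero]
    positivity
  · have hnpos : (0 : ℝ) < n := by exact_mod_cast hn
    calc |1 / (n : ℝ) * Zᵀ.mulVec ξ j - 1 / (n : ℝ) * Zᵀ.mulVec (Ξ.mulVec θs) j|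
        ≤ |1 / (n : ℝ) * Zᵀ.mulVec ξ j| + |1 / (n : ℝ) * Zᵀ.mulVec (Ξ.mulVec θs) j| :=
            abs_sub _ _
      _ ≤ ε + 1 / (n : ℝ) * ((n : ℝ) * ((1 + δ) * δ * S)) := by
          refine add_le_add (hξ j) ?_
          rw [abs_mul, abs_of_pos (by positivity : (0:ℝ) < 1 / (n:ℝ))]
          exact mul_le_mul_of_nonneg_left hkey (by positivity)
      _ = (1 + δ) * δ * S + ε := by field_simp; ring
end
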